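/- Suppose λ ∈ K is not equal to −p for any positive integer p. Then for every integer n > m, the kernel of D(n) equals the image of D(n−m−1), on both the even and the odd parts; that is, the cohomology H^{n+2}(d_λ) vanishes for all n > m. -/

import Mathlib

namespace LinfCohomology

variable {K : Type*} [Field K] [CharZero K]

/- Cochain conventions: for `n ≥ 0`, the even part of `C(n)` has coordinates
`E1,…,E6` (for `φ^{1,0,n+1}_1, φ^{1,0,n+1}_2, φ^{0,1,n+1}_1, φ^{0,1,n+1}_2,
φ^{0,0,n+2}_3, φ^{1,1,n}_3`) and the odd part has coordinates `O1,…,O6` (for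
`ψ^{1,0,n+1}_3, ψ^{0,1,n+1}_3, ψ^{0,0,n+2}_1, ψ^{0,0,n+2}_2, ψ^{1,1,n}_1,
ψ^{1,1,n}_2`); `C(-1)` has even coordinates `E1,…,E5` and odd `O1,…,O4`. -/

/-- The even part of the coboundary operator `D(n)` of
`d_λ = ψ^{0,1,m+1}_3 + λψ^{1,1,m}_1`, for `n ≥ 0`:
`E1 ↦ -(n+1)O5`, `E2 ↦ -O1+(λ-n-1)O6`, `E3 ↦ 0`, `E4 ↦ -O2-λO5`,
`E5 ↦ (n+1-m)O2-λmO5`, `E6 ↦ 0`. -/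
def De (m : ℕ) (lam : K) (n : ℕ) : (Fin 6 → K) →ₗ[K] (Fin 6 → K) :=
  Matrix.mulVecLin
    !![0, -1, 0, 0, 0, 0;
       0, 0, 0, -1, (n : K) + 1 - (m : K), 0;
       0, 0, 0, 0, 0, 0;
       0, 0, 0, 0, 0, 0;
       -((n : K) + 1), 0, 0, -lam, -(lam * (m : K)), 0;
       0, lam - (n : K) - 1, 0, 0, 0, 0]

/-- The odd part of the coboundary operator `D(n)` of `d_λ`, for `n ≥ 0`:
`O1 ↦ (λ+m-n)E6`, `O2 ↦ 0`, `O3 ↦ (λ+n+2)E3`, `O4 ↦ -λE1+(n+2)E4+E5`,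
`O5 ↦ 0`, `O6 ↦ E6`. -/
def Do (m : ℕ) (lam : K) (n : ℕ) : (Fin 6 → K) →ₗ[K] (Fin 6 → K) :=
  Matrix.mulVecLin
    !![0, 0, 0, -lam, 0, 0;
       0, 0, 0, 0, 0, 0;
       0, 0, lam + (n : K) + 2, 0, 0, 0;
       0, 0, 0, (n : K) + 2, 0, 0;
       0, 0, 0, 1, 0, 0;
       lam + (m : K) - (n : K), 0, 0, 0, 0, 1]

/-- The even part of `D(-1)` of `d_λ` (on degree-1 cochains):
`E1 ↦ 0`, `E2 ↦ -O1+λO6`, `E3 ↦ 0`, `E4 ↦ -O2-λO5`, `E5 ↦ -mO2-λmO5`. -/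
def DeNeg1 (m : ℕ) (lam : K) : (Fin 5 → K) →ₗ[K] (Fin 6 → K) :=
  Matrix.mulVecLin
    !![0, -1, 0, 0, 0;
       0, 0, 0, -1, -(m : K);
       0, 0, 0, 0, 0;
       0, 0, 0, 0, 0;
       0, 0, 0, -lam, -(lam * (m : K));
       0, lam, 0, 0, 0]

/-- The odd part of `D(-1)` of `d_λ` (on degree-1 cochains):
`O1 ↦ (λ+m+1)E6`, `O2 ↦ 0`, `O3 ↦ (λ+1)E3`, `O4 ↦ -λE1+E4+E5`. -/
def DoNeg1 (m : ℕ) (lam : K) : (Fin 4 → K) →ₗ[K] (Fin 6 → K) :=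
  Matrix.mulVecLin
    !![0, 0, 0, -lam;
       0, 0, 0, 0;
       0, 0, lam + 1, 0;
       0, 0, 0, 1;
       0, 0, 0, 1;
       lam + (m : K) + 1, 0, 0, 0]

end LinfCohomology

/-!
Write `n = k + m + 1`. Both composites `D(n) ∘ D(k)` vanish identically, so only
`ker D(n) ⊆ im D(k)` needs proof, and there every cocycle has an explicit primitive. Building it
divides by `k + 1` and `k + m + 2`, nonzero in characteristic zero, and by `λ + k + 2`; on the odd
side the cocycle condition kills the `O3`-coordinate because `λ + k + m + 3 ≠ 0`. These two
factors are where the hypothesis that `λ` is not a negative integer enters.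
-/

namespace LinfCohomology

open LinearMap

variable {K : Type*} [Field K] (m : ℕ) (lam : K)

theorem De_apply (n : ℕ) (v : Fin 6 → K) :
    De m lam n v = ![-v 1, -v 3 + ((n : K) + 1 - m) * v 4, 0, 0,
      -((n : K) + 1) * v 0 - lam * v 3 - lam * m * v 4, (lam - n - 1) * v 1] := by
  ext i
  fin_cases i <;> simp [De, Matrix.mulVec, dotProduct, Fin.sum_univ_six, sub_eq_add_neg]

theorem Do_apply (n : ℕ) (v : Fin 6 → K) :
    Do m lam n v = ![-lam * v 3, 0, (lam + n + 2) * v 2, (n + 2) * v 3, v 3,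
      (lam + m - n) * v 0 + v 5] := by
  ext i
  fin_cases i <;> simp [Do, Matrix.mulVec, dotProduct, Fin.sum_univ_six]

theorem De_comp_Do (k : ℕ) : De m lam (k + m + 1) ∘ₗ Do m lam k = 0 := by
  ext v i
  fin_cases i <;> simp [De_apply, Do_apply] <;> ring

theorem Do_comp_De (k : ℕ) : Do m lam (k + m + 1) ∘ₗ De m lam k = 0 := by
  ext v i
  fin_cases i <;> simp [De_apply, Do_apply]
  ring

variable [CharZero K]

theorem ker_De_le_range_Do {k : ℕ} (h : lam + k + 2 ≠ 0) :
    ker (De m lam (k + m + 1)) ≤ range (Do m lam k) := by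
  intro v hv
  rw [mem_ker, De_apply] at hv
  have h1 : v 1 = 0 := by simpa using congrFun hv 0
  have h3 : v 3 = (k + 2) * v 4 := by
    have := congrFun hv 1
    simp only [Matrix.cons_val, Pi.zero_apply, Nat.cast_add, Nat.cast_one] at this
    linear_combination -this
  have h0 : v 0 = -lam * v 4 := by
    have := congrFun hv 4
    simp only [Matrix.cons_val, Pi.zero_apply, Nat.cast_add, Nat.cast_one] at this
    have hA : (k + m + 2 : K) ≠ 0 := by exact_mod_cast (k + m + 1).succ_ne_zero
    apply mul_left_cancel₀ hA
    linear_combination -this - lam * h3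
  refine ⟨![0, 0, (lam + k + 2)⁻¹ * v 2, v 4, 0, v 5], ?_⟩
  ext i
  fin_cases i <;> simp [Do_apply, h0, h1, h3, mul_inv_cancel_left₀ h]

theorem ker_Do_le_range_De {k : ℕ} (h : lam + k + m + 3 ≠ 0) :
    ker (Do m lam (k + m + 1)) ≤ range (De m lam k) := by
  intro v hv
  rw [mem_ker, Do_apply] at hv
  have h2 : v 2 = 0 := by
    have := congrFun hv 2
    simp only [Matrix.cons_val, Pi.zero_apply, Nat.cast_add, Nat.cast_one] at this
    exact (mul_eq_zero.mp this).resolve_left fun h' => h (by linear_combination h')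
  have h3 : v 3 = 0 := by simpa using congrFun hv 4
  have h5 : v 5 = (k + 1 - lam) * v 0 := by
    have := congrFun hv 5
    simp only [Matrix.cons_val, Pi.zero_apply, Nat.cast_add, Nat.cast_one] at this
    linear_combination this
  have hC : (k + 1 : K) ≠ 0 := by exact_mod_cast k.succ_ne_zero
  refine ⟨![(k + 1 : K)⁻¹ * (lam * v 1 - v 4), -v 0, 0, -v 1, 0, 0], ?_⟩
  ext i
  fin_cases i <;> simp [De_apply, h2, h3, h5]
  · field_simp
    ring
  · ring

theorem ker_De_eq_range_Do {k : ℕ} (h : lam + k + 2 ≠ 0) :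
    ker (De m lam (k + m + 1)) = range (Do m lam k) :=
  le_antisymm (ker_De_le_range_Do m lam h) (range_le_ker_iff.mpr (De_comp_Do m lam k))

theorem ker_Do_eq_range_De {k : ℕ} (h : lam + k + m + 3 ≠ 0) :
    ker (Do m lam (k + m + 1)) = range (De m lam k) :=
  le_antisymm (ker_Do_le_range_De m lam h) (range_le_ker_iff.mpr (Do_comp_De m lam k))

/-- If `λ` is not a negative integer, then for every `n > m` the kernel of `D(n)`
equals the image of `D(n-m-1)` on both the even and the odd parts: the cohomology
`H^{n+2}(d_λ)` vanishes for all `n > m`. -/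
theorem dLam_high_cohomology_vanishes (m : ℕ) (lam : K)
    (hlam : ∀ p : ℕ, 0 < p → lam ≠ -(p : K)) (n : ℕ) (hn : m < n) :
    LinearMap.ker (De m lam n) = LinearMap.range (Do m lam (n - m - 1)) ∧
    LinearMap.ker (Do m lam n) = LinearMap.range (De m lam (n - m - 1)) := by
  obtain ⟨k, rfl⟩ : ∃ k, n = k + m + 1 := ⟨n - m - 1, by omega⟩
  rw [show k + m + 1 - m - 1 = k by omega]
  have hlam' (p : ℕ) (hp : 0 < p) : lam + p ≠ 0 := fun h =>
    hlam p hp (eq_neg_of_add_eq_zero_left h)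
  refine ⟨ker_De_eq_range_Do m lam ?_, ker_Do_eq_range_De m lam ?_⟩
  · simpa [add_assoc] using hlam' (k + 2) (by omega)
  · simpa [add_assoc] using hlam' (k + m + 3) (by omega)

end LinfCohomology
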